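/- arXiv:2508.15032 — 4 statements merged into one kernel-verified Lean document; each statement's English description precedes it below -/
import Mathlib

section
/- Let N₂ : (0, ε₀) → ℕ satisfy lim_{s→0+} s·log N₂(s) = +∞. Then lim_{s→0+} ∑_{p prime, p > N₂(s)} p^{-1-2s} = 0. -/
/-!
For a prime `p > N` we have `1 ≤ log p / log N`, so with `σ = 2s` the tail is at most
`(log N)⁻¹ ∑_p log p · p^{-1-σ}`. Chebyshev's bound `θ x ≤ x log 4` bounds the contribution
of the primes in a dyadic block `[2^k, 2^{k+1})` by `2 log 4 · 2^{-σk}`, and summing the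
geometric series gives `∑_p log p · p^{-1-σ} = O(1/σ)`. The tail is thus `O(1/(s log N₂(s)))`,
which tends to `0`.
-/

open Filter Real Finset Chebyshev

theorem Real.inv_one_sub_exp_neg_le {x : ℝ} (hx : 0 < x) : (1 - exp (-x))⁻¹ ≤ 1 + x⁻¹ := by
  have h := add_one_le_exp x
  have he : exp x - 1 ≠ 0 := by linarith
  rw [exp_neg, show 1 - (exp x)⁻¹ = (exp x - 1) / exp x by field_simp,
    inv_div, show exp x / (exp x - 1) = 1 + (exp x - 1)⁻¹ by field_simp; ring]
  gcongr
  linarith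

theorem sum_log_le_theta_of_forall_le {F : Finset Nat.Primes} {x : ℝ}
    (hF : ∀ p ∈ F, ((p : ℕ) : ℝ) ≤ x) :
    ∑ p ∈ F, log ((p : ℕ) : ℝ) ≤ θ x := by
  let ι : Nat.Primes ↪ ℕ := ⟨(↑), Nat.Primes.coe_nat_injective⟩
  calc ∑ p ∈ F, log ((p : ℕ) : ℝ) = ∑ p ∈ F.map ι, log (p : ℝ) := by
        rw [sum_map]; rfl
    _ ≤ ∑ p ∈ Nat.primesLE ⌊x⌋₊, log (p : ℝ) := by
      refine sum_le_sum_of_subset_of_nonneg ?_ fun p _ _ => log_natCast_nonneg p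
      intro p hp
      obtain ⟨q, hq, rfl⟩ := mem_map.mp hp
      exact Nat.mem_primesLE.mpr ⟨Nat.le_floor (hF q hq), q.2⟩
    _ = θ x := (theta_eq_sum_primesLE x).symm

theorem sum_log_mul_rpow_of_log_two_eq_le (F : Finset Nat.Primes) {σ : ℝ} (hσ : -1 ≤ σ)
    (k : ℕ) :
    ∑ p ∈ F with Nat.log 2 (p : Nat.Primes) = k,
        log ((p : ℕ) : ℝ) * ((p : ℕ) : ℝ) ^ (-(1 + σ)) ≤
      2 * log 4 * ((2 : ℝ) ^ (-σ)) ^ k := by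
  have h2k : (0 : ℝ) < 2 ^ k := by positivity
  have hbounds : ∀ p ∈ {p ∈ F | Nat.log 2 (p : Nat.Primes) = k},
      (2 : ℝ) ^ k ≤ ((p : ℕ) : ℝ) ∧ ((p : ℕ) : ℝ) ≤ 2 ^ (k + 1) := by
    intro p hp
    obtain ⟨-, rfl⟩ := mem_filter.mp hp
    exact ⟨mod_cast Nat.pow_log_le_self 2 p.2.ne_zero,
      mod_cast (Nat.lt_pow_succ_log_self one_lt_two _).le⟩
  calc _ ≤ ∑ p ∈ F with Nat.log 2 (p : Nat.Primes) = k,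
          log ((p : ℕ) : ℝ) * ((2 : ℝ) ^ k) ^ (-(1 + σ)) := by
        refine sum_le_sum fun p hp => mul_le_mul_of_nonneg_left ?_ (log_natCast_nonneg _)
        exact rpow_le_rpow_of_nonpos h2k (hbounds p hp).1 (by linarith)
    _ = (∑ p ∈ F with Nat.log 2 (p : Nat.Primes) = k, log ((p : ℕ) : ℝ)) *
          ((2 : ℝ) ^ k) ^ (-(1 + σ)) := (sum_mul ..).symm
    _ ≤ (log 4 * 2 ^ (k + 1)) * ((2 : ℝ) ^ k) ^ (-(1 + σ)) := by
        gcongr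
        exact (sum_log_le_theta_of_forall_le fun p hp => (hbounds p hp).2).trans
          (theta_le_log4_mul_x (by positivity))
    _ = 2 * log 4 * ((2 : ℝ) ^ (-σ)) ^ k := by
        rw [neg_add, rpow_add h2k, rpow_neg_one, rpow_pow_comm zero_le_two]
        field_simp
        ring

theorem sum_log_mul_rpow_le (F : Finset Nat.Primes) {σ : ℝ} (hσ : 0 < σ) :
    ∑ p ∈ F, log ((p : ℕ) : ℝ) * ((p : ℕ) : ℝ) ^ (-(1 + σ)) ≤ 4 * (1 + σ) / σ := by
  have hr : (2 : ℝ) ^ (-σ) = exp (-(σ * log 2)) := by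
    rw [rpow_def_of_pos two_pos]; ring_nf
  set r : ℝ := (2 : ℝ) ^ (-σ)
  have hr1 : r < 1 := by rw [hr, exp_lt_one_iff]; have := log_pos one_lt_two; nlinarith
  have hlog4 : log 4 = 2 * log 2 := by
    rw [show (4 : ℝ) = 2 ^ 2 by norm_num, log_pow]; norm_num
  have hlog2 : log 2 < 1 := log_two_lt_d9.trans (by norm_num)
  have hmaps : ∀ p ∈ F, Nat.log 2 p ∈ range (F.sup (Nat.log 2 ·) + 1) := fun p hp =>
    mem_range_succ_iff.mpr (le_sup (f := fun p : Nat.Primes => Nat.log 2 p) hp)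
  rw [← sum_fiberwise_of_maps_to hmaps]
  calc _ ≤ ∑ k ∈ range (F.sup (Nat.log 2 ·) + 1), 2 * log 4 * r ^ k :=
        sum_le_sum fun k _ => sum_log_mul_rpow_of_log_two_eq_le F (by linarith) k
    _ = 2 * log 4 * ∑ k ∈ range (F.sup (Nat.log 2 ·) + 1), r ^ k := (mul_sum ..).symm
    _ ≤ 2 * log 4 * (1 - r)⁻¹ := by
        gcongr
        rw [range_eq_Ico, inv_eq_one_div, ← pow_zero r]
        exact geom_sum_Ico_le_of_lt_one (by positivity) hr1
    _ ≤ 2 * log 4 * (1 + (σ * log 2)⁻¹) := by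
        gcongr
        rw [hr]
        exact inv_one_sub_exp_neg_le (by positivity)
    _ = 4 * log 2 + 4 / σ := by
        rw [hlog4]
        field_simp
        norm_num
    _ ≤ 4 * (1 + σ) / σ := by
        rw [show 4 * (1 + σ) / σ = 4 + 4 / σ by field_simp; ring]
        linarith

theorem tsum_primes_gt_rpow_le {σ : ℝ} (hσ : 0 < σ) {N : ℕ} (hN : 0 < log N) :
    ∑' p : Nat.Primes, (if N < (p : ℕ) then ((p : ℕ) : ℝ) ^ (-(1 + σ)) else 0) ≤
      4 * (1 + σ) / (σ * log N) := by
  have hterm : ∀ p : Nat.Primes, (if N < (p : ℕ) then ((p : ℕ) : ℝ) ^ (-(1 + σ)) else 0) ≤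
      log ((p : ℕ) : ℝ) * ((p : ℕ) : ℝ) ^ (-(1 + σ)) / log N := by
    intro p
    split_ifs with hNp
    · rw [le_div_iff₀ hN, mul_comm]
      gcongr
      exact Nat.cast_pos.mpr (Nat.pos_of_ne_zero (by rintro rfl; simp at hN))
    · exact div_nonneg (mul_nonneg (log_natCast_nonneg _) (by positivity)) hN.le
  refine tsum_le_of_sum_le' (by positivity) fun F => ?_
  calc _ ≤ ∑ p ∈ F, log ((p : ℕ) : ℝ) * ((p : ℕ) : ℝ) ^ (-(1 + σ)) / log N :=
        sum_le_sum fun p _ => hterm p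
    _ = (∑ p ∈ F, log ((p : ℕ) : ℝ) * ((p : ℕ) : ℝ) ^ (-(1 + σ))) / log N :=
        (sum_div ..).symm
    _ ≤ 4 * (1 + σ) / σ / log N := by gcongr; exact sum_log_mul_rpow_le F hσ
    _ = 4 * (1 + σ) / (σ * log N) := div_div ..

/-- If `s · log N₂(s) → +∞` as `s → 0+`, then the tail prime sum
`∑_{p > N₂(s)} p^{-1-2s}` tends to `0` as `s → 0+`. -/
theorem tail_prime_sum_tendsto_zero (N₂ : ℝ → ℕ)
    (h : Tendsto (fun s : ℝ => s * Real.log (N₂ s)) (nhdsWithin 0 (Set.Ioi 0)) atTop) :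
    Tendsto (fun s : ℝ =>
        ∑' p : Nat.Primes, if N₂ s < (p : ℕ) then ((p : ℕ) : ℝ) ^ (-(1 + 2 * s)) else 0)
      (nhdsWithin 0 (Set.Ioi 0)) (nhds 0) := by
  have hbound : ∀ᶠ s in nhdsWithin 0 (Set.Ioi 0),
      (∑' p : Nat.Primes, if N₂ s < (p : ℕ) then ((p : ℕ) : ℝ) ^ (-(1 + 2 * s)) else 0) ≤
        2 * (1 + 2 * s) * (s * log (N₂ s))⁻¹ := by
    filter_upwards [self_mem_nhdsWithin, h.eventually_gt_atTop 0] with s (hs : 0 < s) hsN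
    calc _ ≤ 4 * (1 + 2 * s) / (2 * s * log (N₂ s)) :=
          tsum_primes_gt_rpow_le (by positivity) (pos_of_mul_pos_right hsN hs.le)
      _ = 2 * (1 + 2 * s) * (s * log (N₂ s))⁻¹ := by ring
  have hlim : Tendsto (fun s : ℝ => 2 * (1 + 2 * s) * (s * log (N₂ s))⁻¹)
      (nhdsWithin 0 (Set.Ioi 0)) (nhds 0) := by
    have hfactor : Tendsto (fun s : ℝ => 2 * (1 + 2 * s)) (nhdsWithin 0 (Set.Ioi 0)) (nhds 2) :=
      ((by fun_prop : Continuous fun s : ℝ => 2 * (1 + 2 * s)).tendsto' 0 2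
        (by norm_num)).mono_left nhdsWithin_le_nhds
    simpa using hfactor.mul h.inv_tendsto_atTop
  exact squeeze_zero' (Eventually.of_forall fun s => tsum_nonneg fun p => by positivity)
    hbound hlim
end

section
/- Let N₁ : (0, ε₀) → ℕ satisfy lim_{s→0+} N₁(s) = ∞ and lim_{s→0+} s·log N₁(s) = 0. Then ∑_{p prime, p ≤ N₁(s)} p^{-1-2s} ~ log log N₁(s) as s → 0+. -/
/-!
For `p ≤ N` we have `N^{-2s} ≤ p^{-2s} ≤ 1`, so the sum is squeezed between
`e^{-2s log N} ∑_{p ≤ N} 1/p` and `∑_{p ≤ N} 1/p`, and `e^{-2s log N} → 1` by hypothesis.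
Everything thus reduces to Mertens' second theorem `∑_{p ≤ N} 1/p = log log N + O(1)`.
It follows by summation by parts against `1 / log` from Mertens' first theorem
`∑_{p ≤ n} log p / p = log n + O(1)`, which comes from Legendre's formula
`log n! = ∑_{p ≤ n} v_p(n!) log p` with `n/p - 1 ≤ v_p(n!) ≤ n/(p-1)`, the bounds
`n log n - n ≤ log n! ≤ n log n` and Chebyshev's bound `θ(n) ≤ n log 4`.
-/

open Real Finset Filter Topology
open scoped Nat

theorem Real.log_factorial_eq_sum_primesLE (n : ℕ) :
    log (n ! : ℝ) = ∑ p ∈ n.primesLE, ((n !).factorization p : ℝ) * log p := by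
  rw [log_nat_eq_sum_factorization, Finsupp.sum]
  refine sum_subset (fun p hp ↦ ?_) fun p _ hp ↦ by simp [Finsupp.notMem_support_iff.mp hp]
  obtain ⟨hp, hdvd, -⟩ := Nat.mem_primeFactors.mp (Nat.support_factorization _ ▸ hp)
  exact Nat.mem_primesLE.mpr ⟨hp.dvd_factorial.mp hdvd, hp⟩

theorem Nat.div_le_factorization_factorial {p : ℕ} (hp : p.Prime) (n : ℕ) :
    n / p ≤ (n !).factorization p :=
  calc n / p ≤ (n / p)!.factorization p + n / p := le_add_self
    _ = (p * (n / p))!.factorization p := (factorization_factorial_mul hp).symm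
    _ ≤ (n !).factorization p :=
      (factorization_le_iff_dvd (factorial_ne_zero _) (factorial_ne_zero _)).mpr
        (factorial_dvd_factorial (mul_div_le n p)) p

theorem Real.log_factorial_le (n : ℕ) : log (n ! : ℝ) ≤ n * log n := by
  rw [← log_pow]
  exact log_le_log (mod_cast n.factorial_pos) (mod_cast n.factorial_le_pow)

theorem Real.mul_log_sub_le_log_factorial (n : ℕ) : n * log n - n ≤ log (n ! : ℝ) := by
  rcases n.eq_zero_or_pos with rfl | hn
  · simp
  have h := log_le_log (by positivity) (pow_div_factorial_le_exp (n : ℝ) (Nat.cast_nonneg n) n)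
  rw [log_div (by positivity) (mod_cast n.factorial_ne_zero), log_pow, log_exp] at h
  linarith

theorem Real.log_div_mul_sub_one_nonneg (n : ℕ) : 0 ≤ log n / (n * (n - 1)) := by
  rcases n with _ | n
  · simp
  · exact div_nonneg (log_natCast_nonneg _) (by push_cast; ring_nf; positivity)

theorem Real.log_div_mul_sub_one_le (n : ℕ) :
    log n / (n * (n - 1)) ≤ 4 * (n : ℝ) ^ (-3 / 2 : ℝ) := by
  rcases lt_or_ge n 2 with hn | hn
  · interval_cases n <;> simp
  have hn' : (2 : ℝ) ≤ n := mod_cast hn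
  have hlog : log n ≤ 2 * (n : ℝ) ^ (1 / 2 : ℝ) := by
    have := log_le_rpow_div (Nat.cast_nonneg n) (by norm_num : (0 : ℝ) < 1 / 2)
    linarith
  have hpow : (n : ℝ) ^ (-3 / 2 : ℝ) * n ^ 2 = n ^ (1 / 2 : ℝ) := by
    rw [← rpow_natCast, ← rpow_add (by positivity)]; norm_num
  rw [div_le_iff₀ (by nlinarith)]
  have := mul_nonneg (mul_nonneg (rpow_nonneg (Nat.cast_nonneg n) (-3 / 2 : ℝ))
    (Nat.cast_nonneg n)) (sub_nonneg.mpr hn')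
  nlinarith

theorem Real.summable_log_div_mul_sub_one :
    Summable fun n : ℕ ↦ log n / (n * (n - 1)) :=
  .of_nonneg_of_le log_div_mul_sub_one_nonneg log_div_mul_sub_one_le
    ((summable_nat_rpow.mpr (by norm_num)).mul_left 4)

open Chebyshev in
theorem sum_primesLE_log_div_le (n : ℕ) : ∑ p ∈ n.primesLE, log p / p ≤ log n + log 4 := by
  rcases n.eq_zero_or_pos with rfl | hn
  · simpa using log_nonneg (by norm_num : (1 : ℝ) ≤ 4)
  have hn' : (0 : ℝ) < n := mod_cast hn
  have hterm (p) (hp : p ∈ n.primesLE) :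
      n * (log p / p) ≤ (n !).factorization p * log p + log p := by
    have hp := Nat.prime_of_mem_primesLE hp
    have hdiv : (n : ℝ) / p ≤ (n !).factorization p + 1 := by
      have h1 := Nat.lt_floor_add_one ((n : ℝ) / p)
      have h2 : ((n / p : ℕ) : ℝ) ≤ (n !).factorization p :=
        mod_cast Nat.div_le_factorization_factorial hp n
      rw [Nat.floor_div_eq_div] at h1
      linarith
    calc n * (log p / p) = n / p * log p := by ring
      _ ≤ ((n !).factorization p + 1) * log p :=
        mul_le_mul_of_nonneg_right hdiv (log_natCast_nonneg p)
      _ = _ := by ring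
  have key : n * ∑ p ∈ n.primesLE, log p / p ≤ n * (log n + log 4) := calc
    n * ∑ p ∈ n.primesLE, log p / p ≤ log (n ! : ℝ) + θ n := by
      rw [log_factorial_eq_sum_primesLE, theta_eq_sum_primesLE_log, mul_sum, ← sum_add_distrib]
      exact sum_le_sum hterm
    _ ≤ n * log n + log 4 * n := add_le_add (log_factorial_le n) (theta_le_log4_mul_x hn'.le)
    _ = n * (log n + log 4) := by ring
  exact le_of_mul_le_mul_left key hn'

theorem log_sub_le_sum_primesLE_log_div (n : ℕ) :
    log n - 1 - ∑' k : ℕ, log k / (k * (k - 1)) ≤ ∑ p ∈ n.primesLE, log p / p := by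
  set K := ∑' k : ℕ, log k / (k * (k - 1))
  have hK : ∑ p ∈ n.primesLE, log p / (p * (p - 1)) ≤ K :=
    summable_log_div_mul_sub_one.sum_le_tsum _ fun k _ ↦ log_div_mul_sub_one_nonneg k
  rcases n.eq_zero_or_pos with rfl | hn
  · have : 0 ≤ K := tsum_nonneg log_div_mul_sub_one_nonneg
    simp only [CharP.cast_eq_zero, log_zero, Nat.primesLE_zero, sum_empty]
    linarith
  have hn' : (0 : ℝ) < n := mod_cast hn
  have hterm (p) (hp : p ∈ n.primesLE) :
      (n !).factorization p * log p ≤ n * (log p / p) + n * (log p / (p * (p - 1))) := by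
    have hp := Nat.prime_of_mem_primesLE hp
    have hp0 : (p : ℝ) ≠ 0 := mod_cast hp.ne_zero
    have hp1 : (p : ℝ) - 1 ≠ 0 := sub_ne_zero.mpr (mod_cast hp.one_lt.ne')
    have hv : ((n !).factorization p : ℝ) ≤ n / (p - 1) := calc
      _ ≤ ((n / (p - 1) : ℕ) : ℝ) := mod_cast Nat.factorization_factorial_le_div_pred hp n
      _ ≤ (n : ℝ) / ((p - 1 : ℕ) : ℝ) := Nat.cast_div_le
      _ = n / (p - 1) := by rw [Nat.cast_pred hp.pos]
    calc _ ≤ n / (p - 1) * log p := mul_le_mul_of_nonneg_right hv (log_natCast_nonneg p)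
      _ = _ := by field_simp; ring
  have hfact : log (n ! : ℝ) ≤ n * ∑ p ∈ n.primesLE, log p / p +
      n * ∑ p ∈ n.primesLE, log p / (p * (p - 1)) := by
    rw [log_factorial_eq_sum_primesLE, mul_sum, mul_sum, ← sum_add_distrib]
    exact sum_le_sum hterm
  have key : n * (log n - 1 - K) ≤ n * ∑ p ∈ n.primesLE, log p / p := by
    nlinarith [mul_log_sub_le_log_factorial n, mul_le_mul_of_nonneg_left hK hn'.le]
  exact le_of_mul_le_mul_left key hn'

theorem exists_abs_sum_primesLE_log_div_sub_log_le :
    ∃ C, ∀ n : ℕ, |∑ p ∈ n.primesLE, log p / p - log n| ≤ C := by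
  set K := ∑' k : ℕ, log k / (k * (k - 1))
  refine ⟨max (log 4) (1 + K), fun n ↦ abs_le.mpr ⟨?_, ?_⟩⟩
  · linarith [log_sub_le_sum_primesLE_log_div n, le_max_right (log 4) (1 + K)]
  · linarith [sum_primesLE_log_div_le n, le_max_left (log 4) (1 + K)]

theorem Real.log_sub_log_le_of_le_add_one {u v : ℝ} (hu : 0 < u) (huv : u ≤ v) (hvu : v ≤ u + 1) :
    1 - u / v ≤ log v - log u ∧ log v - log u ≤ 1 - u / v + (u⁻¹ - v⁻¹) := by
  have hv : 0 < v := hu.trans_le huv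
  rw [← log_div hv.ne' hu.ne']
  refine ⟨by simpa using one_sub_inv_le_log_of_pos (div_pos hv hu), ?_⟩
  refine (log_le_sub_one_of_pos (div_pos hv hu)).trans ?_
  rw [← sub_nonneg]
  have : 1 - u / v + (u⁻¹ - v⁻¹) - (v / u - 1) = (v - u) * (u + 1 - v) / (u * v) := by
    field_simp
  rw [this]
  exact div_nonneg (mul_nonneg (by linarith) (by linarith)) (by positivity)

theorem Real.log_succ_le_log_add_one {k : ℕ} (hk : 1 ≤ k) : log (k + 1 : ℝ) ≤ log k + 1 := by
  have hk' : (1 : ℝ) ≤ k := mod_cast hk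
  calc log (k + 1 : ℝ) ≤ log (2 * k) := log_le_log (by positivity) (by linarith)
    _ = log 2 + log k := log_mul two_ne_zero (by positivity)
    _ ≤ log k + 1 := by linarith [log_two_lt_d9]

theorem sum_range_div_log_eq {a : ℕ → ℝ} (ha0 : a 0 = 0) (ha1 : a 1 = 0) {N : ℕ} (hN : 2 ≤ N) :
    ∑ k ∈ range (N + 1), a k / log k =
      (∑ k ∈ range (N + 1), a k) / log N +
        ∑ k ∈ Ico 2 N, ((log k)⁻¹ - (log (k + 1 : ℝ))⁻¹) * ∑ j ∈ range (k + 1), a j := by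
  have h := sum_Ico_by_parts (fun k : ℕ ↦ (log k)⁻¹) a (by omega : 2 < N + 1)
  have hG2 : ∑ k ∈ range 2, a k = 0 := by simp [sum_range_succ, ha0, ha1]
  have hsplit : ∑ k ∈ range 2, a k / log k = 0 := by simp [sum_range_succ, ha0, ha1]
  rw [← sum_range_add_sum_Ico _ (by omega : 2 ≤ N + 1), hsplit, zero_add]
  simp only [smul_eq_mul, hG2, Nat.add_sub_cancel, mul_zero, sub_zero, ← div_eq_inv_mul] at h
  rw [h, sub_eq_add_neg, ← sum_neg_distrib]
  push_cast
  congr 1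
  exact sum_congr rfl fun k _ ↦ by ring

theorem Real.inv_log_succ_le_inv_log {k : ℕ} (hk : 2 ≤ k) : (log (k + 1 : ℝ))⁻¹ ≤ (log k)⁻¹ :=
  inv_anti₀ (log_pos (mod_cast hk)) (log_le_log (by positivity) (by linarith))

theorem sum_Ico_inv_log_sub_inv_log_succ {N : ℕ} (hN : 2 ≤ N) :
    ∑ k ∈ Ico 2 N, ((log k)⁻¹ - (log (k + 1 : ℝ))⁻¹) = (log 2)⁻¹ - (log N)⁻¹ := by
  have h := sum_Ico_sub (fun k : ℕ ↦ -(log k)⁻¹) hN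
  push_cast at h
  rw [neg_sub_neg] at h
  rw [← h]
  exact sum_congr rfl fun k _ ↦ by ring

theorem sum_Ico_inv_log_sub_inv_log_succ_mul_log_bounds {N : ℕ} (hN : 2 ≤ N) :
    log (log N) - log (log 2) - (log 2)⁻¹ ≤
        ∑ k ∈ Ico 2 N, ((log k)⁻¹ - (log (k + 1 : ℝ))⁻¹) * log k ∧
      ∑ k ∈ Ico 2 N, ((log k)⁻¹ - (log (k + 1 : ℝ))⁻¹) * log k ≤
        log (log N) - log (log 2) := by
  have hterm (k) (hk : k ∈ Ico 2 N) :
      ((log k)⁻¹ - (log (k + 1 : ℝ))⁻¹) * log k ≤ log (log (k + 1 : ℝ)) - log (log k) ∧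
      log (log (k + 1 : ℝ)) - log (log k) ≤
        ((log k)⁻¹ - (log (k + 1 : ℝ))⁻¹) * log k + ((log k)⁻¹ - (log (k + 1 : ℝ))⁻¹) := by
    have hk2 := (mem_Ico.mp hk).1
    have hu : 0 < log k := log_pos (mod_cast hk2)
    have hmul : ((log k)⁻¹ - (log (k + 1 : ℝ))⁻¹) * log k = 1 - log k / log (k + 1 : ℝ) := by
      field_simp
    rw [hmul]
    exact log_sub_log_le_of_le_add_one hu (log_le_log (by positivity) (by linarith))
      (log_succ_le_log_add_one (by omega))
  have htele : ∑ k ∈ Ico 2 N, (log (log (k + 1 : ℝ)) - log (log k)) =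
      log (log N) - log (log 2) := by
    simpa using sum_Ico_sub (fun k : ℕ ↦ log (log k)) hN
  have hlower := sum_le_sum fun k hk ↦ (hterm k hk).2
  have hupper := sum_le_sum fun k hk ↦ (hterm k hk).1
  rw [htele, sum_add_distrib, sum_Ico_inv_log_sub_inv_log_succ hN] at hlower
  rw [htele] at hupper
  have : 0 ≤ (log N)⁻¹ := inv_nonneg.mpr (log_nonneg (by norm_cast; omega))
  exact ⟨by linarith, hupper⟩

theorem abs_sum_div_log_sub_loglog_le {a : ℕ → ℝ} {C : ℝ} (ha0 : a 0 = 0) (ha1 : a 1 = 0)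
    (hA : ∀ n ≥ 2, |∑ k ∈ range (n + 1), a k - log n| ≤ C) {N : ℕ} (hN : 2 ≤ N) :
    |∑ k ∈ range (N + 1), a k / log k - log (log N)| ≤ 4 * C + 2 := by
  set A : ℕ → ℝ := fun n ↦ ∑ k ∈ range (n + 1), a k
  set δ : ℕ → ℝ := fun k ↦ (log k)⁻¹ - (log (k + 1 : ℝ))⁻¹
  have hC : 0 ≤ C := (abs_nonneg _).trans (hA 2 le_rfl)
  have hlog2 : 1 / 2 < log 2 := by linarith [log_two_gt_d9]
  have hlogN : log 2 ≤ log N := log_le_log two_pos (mod_cast hN)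
  have hinv2 : (log 2)⁻¹ ≤ 2 := by simpa using inv_anti₀ (by norm_num) hlog2.le
  have hinvN : (log N)⁻¹ ≤ (log 2)⁻¹ := inv_anti₀ (by linarith) hlogN
  have hinvN₀ : 0 ≤ (log N)⁻¹ := inv_nonneg.mpr (by linarith)
  have hloglog2 : -1 ≤ log (log 2) ∧ log (log 2) ≤ 0 := by
    have := one_sub_inv_le_log_of_pos (x := log 2) (by linarith)
    exact ⟨by linarith, log_nonpos (by linarith) (by linarith [log_two_lt_d9])⟩
  have hsplit : ∑ k ∈ range (N + 1), a k / log k = A N / log N +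
      ∑ k ∈ Ico 2 N, δ k * log k + ∑ k ∈ Ico 2 N, δ k * (A k - log k) := by
    rw [sum_range_div_log_eq ha0 ha1 hN, add_assoc, ← sum_add_distrib]
    exact congrArg _ (sum_congr rfl fun k _ ↦ by ring)
  have hend : |A N / log N - 1| ≤ C * 2 := by
    have hlogN₀ : 0 < log N := by linarith
    rw [div_sub_one hlogN₀.ne', abs_div, abs_of_pos hlogN₀, div_eq_mul_inv]
    exact mul_le_mul (hA N hN) (hinvN.trans hinv2) (by positivity) hC
  have herr : |∑ k ∈ Ico 2 N, δ k * (A k - log k)| ≤ C * 2 := calc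
    _ ≤ ∑ k ∈ Ico 2 N, δ k * C := by
      refine (abs_sum_le_sum_abs _ _).trans (sum_le_sum fun k hk ↦ ?_)
      have hδ : 0 ≤ δ k := sub_nonneg.mpr (inv_log_succ_le_inv_log (mem_Ico.mp hk).1)
      rw [abs_mul, abs_of_nonneg hδ]
      exact mul_le_mul_of_nonneg_left (hA k (mem_Ico.mp hk).1) hδ
    _ = ((log 2)⁻¹ - (log N)⁻¹) * C := by rw [← sum_mul, sum_Ico_inv_log_sub_inv_log_succ hN]
    _ ≤ C * 2 := by nlinarith
  obtain ⟨hmain₁, hmain₂⟩ := sum_Ico_inv_log_sub_inv_log_succ_mul_log_bounds hN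
  rw [hsplit, abs_le]
  rw [abs_le] at hend herr
  constructor <;> linarith

theorem exists_abs_sum_primesLE_inv_sub_loglog_le :
    ∃ C, ∀ N : ℕ, 2 ≤ N → |∑ p ∈ N.primesLE, (p : ℝ)⁻¹ - log (log N)| ≤ C := by
  obtain ⟨C, hC⟩ := exists_abs_sum_primesLE_log_div_sub_log_le
  let a (k : ℕ) : ℝ := if k.Prime then log k / k else 0
  have hsum (n : ℕ) : ∑ k ∈ range (n + 1), a k = ∑ p ∈ n.primesLE, log p / p := by
    rw [Nat.primesLE_eq_filter_range, sum_filter]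
  have hsum_div (n : ℕ) : ∑ k ∈ range (n + 1), a k / log k = ∑ p ∈ n.primesLE, (p : ℝ)⁻¹ := by
    simp only [a]
    rw [Nat.primesLE_eq_filter_range, sum_filter]
    refine sum_congr rfl fun k _ ↦ ?_
    split_ifs with hk
    · have : log k ≠ 0 := (log_pos (mod_cast hk.one_lt)).ne'
      field_simp
    · simp
  refine ⟨4 * C + 2, fun N hN ↦ ?_⟩
  rw [← hsum_div]
  exact abs_sum_div_log_sub_loglog_le (by simp [a]) (by simp [a])
    (fun n _ ↦ hsum n ▸ hC n) hN

theorem tendsto_sum_primesLE_inv_div_loglog :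
    Tendsto (fun N : ℕ ↦ (∑ p ∈ N.primesLE, (p : ℝ)⁻¹) / log (log N)) atTop (𝓝 1) := by
  obtain ⟨C, hC⟩ := exists_abs_sum_primesLE_inv_sub_loglog_le
  have hloglog : Tendsto (fun N : ℕ ↦ log (log N)) atTop atTop :=
    tendsto_log_atTop.comp (tendsto_log_atTop.comp tendsto_natCast_atTop_atTop)
  have hbigO : (fun N : ℕ ↦ ∑ p ∈ N.primesLE, (p : ℝ)⁻¹ - log (log N)) =O[atTop]
      fun _ ↦ (1 : ℝ) :=
    Asymptotics.IsBigO.of_bound C <| (eventually_ge_atTop 2).mono fun N hN ↦ by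
      simpa using hC N hN
  have hequiv := (hbigO.trans_isLittleO ((Asymptotics.isLittleO_one_left_iff ℝ).mpr
    (tendsto_norm_atTop_atTop.comp hloglog))).isEquivalent
  exact (Asymptotics.isEquivalent_iff_tendsto_one
    (hloglog.eventually_ne_atTop 0)).mp hequiv

theorem Nat.Primes.tsum_ite_le_eq_sum_primesLE {M : Type*} [AddCommMonoid M] [TopologicalSpace M]
    (f : ℕ → M) (N : ℕ) :
    ∑' p : Nat.Primes, (if (p : ℕ) ≤ N then f p else 0) = ∑ p ∈ N.primesLE, f p := by
  rw [Nat.Primes.tsum_eq_tsum_ite (fun n ↦ if n ≤ N then f n else 0),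
    tsum_eq_sum (s := N.primesLE) fun n _ ↦ by grind [Nat.mem_primesLE]]
  exact sum_congr rfl fun p _ ↦ by grind [Nat.mem_primesLE]

theorem Real.rpow_neg_one_add_le_inv {x t : ℝ} (hx : 1 ≤ x) (ht : 0 ≤ t) :
    x ^ (-(1 + t)) ≤ x⁻¹ := by
  rw [← rpow_neg_one]
  exact rpow_le_rpow_of_exponent_le hx (by linarith)

theorem Real.exp_neg_mul_log_mul_inv_le_rpow {x y t : ℝ} (hx : 0 < x) (hxy : x ≤ y) (ht : 0 ≤ t) :
    exp (-(t * log y)) * x⁻¹ ≤ x ^ (-(1 + t)) := by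
  rw [neg_add, rpow_add hx, rpow_neg_one, mul_comm (x⁻¹)]
  refine mul_le_mul_of_nonneg_right ?_ (inv_nonneg.mpr hx.le)
  rw [rpow_def_of_pos hx, exp_le_exp]
  nlinarith [log_le_log hx hxy]

theorem exp_neg_mul_log_mul_sum_primesLE_inv_le {t : ℝ} (ht : 0 ≤ t) (N : ℕ) :
    exp (-(t * log N)) * ∑ p ∈ N.primesLE, (p : ℝ)⁻¹ ≤ ∑ p ∈ N.primesLE, (p : ℝ) ^ (-(1 + t)) := by
  rw [mul_sum]
  refine sum_le_sum fun p hp ↦ ?_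
  obtain ⟨hpN, hp⟩ := Nat.mem_primesLE.mp hp
  exact exp_neg_mul_log_mul_inv_le_rpow (mod_cast hp.pos) (mod_cast hpN) ht

theorem sum_primesLE_rpow_le_sum_inv {t : ℝ} (ht : 0 ≤ t) (N : ℕ) :
    ∑ p ∈ N.primesLE, (p : ℝ) ^ (-(1 + t)) ≤ ∑ p ∈ N.primesLE, (p : ℝ)⁻¹ :=
  sum_le_sum fun _ hp ↦
    rpow_neg_one_add_le_inv (mod_cast (Nat.prime_of_mem_primesLE hp).one_le) ht

/-- If `N₁(s) → ∞` and `s · log N₁(s) → 0` as `s → 0+`, then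
`∑_{p ≤ N₁(s)} p^{-1-2s} ~ log log N₁(s)` as `s → 0+`. -/
theorem initial_prime_sum_asymp (N₁ : ℝ → ℕ)
    (h1 : Tendsto N₁ (nhdsWithin 0 (Set.Ioi 0)) atTop)
    (h2 : Tendsto (fun s : ℝ => s * Real.log (N₁ s)) (nhdsWithin 0 (Set.Ioi 0)) (nhds 0)) :
    Tendsto (fun s : ℝ =>
        (∑' p : Nat.Primes, if (p : ℕ) ≤ N₁ s then ((p : ℕ) : ℝ) ^ (-(1 + 2 * s)) else 0) /
          Real.log (Real.log (N₁ s)))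
      (nhdsWithin 0 (Set.Ioi 0)) (nhds 1) := by
  have hM := tendsto_sum_primesLE_inv_div_loglog.comp h1
  have hexp : Tendsto (fun s ↦ exp (-(2 * s * log (N₁ s)))) (𝓝[>] 0) (𝓝 1) := by
    simpa [mul_assoc, Function.comp_def] using (continuous_exp.tendsto _).comp (h2.const_mul (-2))
  have hloglog : ∀ᶠ s in 𝓝[>] 0, 0 < log (log (N₁ s)) :=
    (tendsto_log_atTop.comp (tendsto_log_atTop.comp
      (tendsto_natCast_atTop_atTop.comp h1))).eventually_gt_atTop 0
  refine tendsto_of_tendsto_of_tendsto_of_le_of_le' (by simpa using hexp.mul hM) hM ?_ ?_ <;>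
    filter_upwards [self_mem_nhdsWithin, hloglog] with s (hs : 0 < s) hLL <;>
    rw [Nat.Primes.tsum_ite_le_eq_sum_primesLE (fun p : ℕ ↦ (p : ℝ) ^ (-(1 + 2 * s)))]
  · rw [← mul_div_assoc]
    exact div_le_div_of_nonneg_right
      (exp_neg_mul_log_mul_sum_primesLE_inv_le (by positivity) _) hLL.le
  · exact div_le_div_of_nonneg_right (sum_primesLE_rpow_le_sum_inv (by positivity) _) hLL.le
end

section
/- Let η₁, η₂, … be i.i.d. with E[η] = 0 and E[η²] = 1, let M : (0, e^{-e}) → ℕ satisfy M(s) → ∞ and M(s)/log(1/s) → 0 as s → 0+, and set L(s) = (2 log(1/s) · log log log(1/s))^{-1/2}. Then lim_{s→0+} L(s) ∑_{p prime, p ≤ M(s)} η_p · p^{-1/2-s} = 0 almost surely. -/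
/-! By the strong law of large numbers applied to `|η k|`, almost surely
`∑ k < n, |η k| ≤ C n` for some `C = C(ω)`, and Abel summation upgrades this to
`∑ k < n, |η k| / √k ≤ 3 C √n`. As `p ^ (-1/2 - s) ≤ p ^ (-1/2)`, the initial fragment is
at most `3 C √(M(s) + 1)` in absolute value, and `L(s) √(M(s) + 1) → 0` because
`M(s) = o(log (1/s))` while `log log log (1/s) → ∞`. -/

open MeasureTheory ProbabilityTheory Filter Finset Topology Real

lemma sq_mul_inv_sub_inv_le {x y : ℝ} (hx : 0 < x) (hxy : x ≤ y) (hy : y ≤ 2 * x) :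
    y ^ 2 * (x⁻¹ - y⁻¹) ≤ 2 * (y - x) := by
  have hy0 : 0 < y := hx.trans_le hxy
  rw [inv_sub_inv hx.ne' hy0.ne', mul_div_assoc', div_le_iff₀ (by positivity)]
  nlinarith [mul_nonneg (mul_nonneg hy0.le (sub_nonneg.2 hxy)) (sub_nonneg.2 hy)]

section AbelSummation

variable {a : ℕ → ℝ} {C : ℝ}

lemma sum_range_div_sqrt_le_add (ha : ∀ k, 0 ≤ a k) (hA : ∀ n, ∑ k ∈ range n, a k ≤ C * n)
    (n : ℕ) : ∑ k ∈ range n, a k / √k ≤ 2 * C * √n + (∑ k ∈ range n, a k) / √n := by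
  have hC : 0 ≤ C := (ha 0).trans (by simpa using hA 1)
  induction n with
  | zero => simp
  | succ n ih =>
    rcases Nat.eq_zero_or_pos n with rfl | hn
    · simp only [sum_range_one, Nat.cast_zero, sqrt_zero, div_zero, zero_add, Nat.cast_one,
        sqrt_one, div_one]
      nlinarith [ha 0]
    have hx : 0 < √(n : ℝ) := sqrt_pos.2 (by exact_mod_cast hn)
    have hxy : √(n : ℝ) ≤ √((n : ℝ) + 1) := sqrt_le_sqrt (by linarith)
    have hy : √((n : ℝ) + 1) ≤ 2 * √(n : ℝ) := by
      rw [show 2 * √(n : ℝ) = √(4 * n) by rw [sqrt_mul' _ (Nat.cast_nonneg n)]; norm_num]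
      have : (1 : ℝ) ≤ n := by exact_mod_cast hn
      exact sqrt_le_sqrt (by linarith)
    have hA' : ∑ k ∈ range (n + 1), a k ≤ C * (√((n : ℝ) + 1)) ^ 2 := by
      rw [sq_sqrt (by positivity)]; exact_mod_cast hA (n + 1)
    have hgap : (∑ k ∈ range (n + 1), a k) * ((√(n : ℝ))⁻¹ - (√((n : ℝ) + 1))⁻¹) ≤
        2 * C * (√((n : ℝ) + 1) - √n) := by
      calc _ ≤ C * (√((n : ℝ) + 1)) ^ 2 * ((√(n : ℝ))⁻¹ - (√((n : ℝ) + 1))⁻¹) :=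
            mul_le_mul_of_nonneg_right hA' (sub_nonneg.2 (inv_anti₀ hx hxy))
        _ ≤ C * (2 * (√((n : ℝ) + 1) - √n)) := by
            rw [mul_assoc]; exact mul_le_mul_of_nonneg_left (sq_mul_inv_sub_inv_le hx hxy hy) hC
        _ = _ := by ring
    calc ∑ k ∈ range (n + 1), a k / √k = ∑ k ∈ range n, a k / √k + a n / √n := sum_range_succ ..
      _ ≤ 2 * C * √n + (∑ k ∈ range (n + 1), a k) / √n := by
          rw [sum_range_succ, add_div]; linarith
      _ ≤ 2 * C * √((n : ℝ) + 1) + (∑ k ∈ range (n + 1), a k) / √((n : ℝ) + 1) := by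
          simp only [div_eq_mul_inv]; linarith
      _ = _ := by push_cast; rfl

lemma sum_range_div_sqrt_le (ha : ∀ k, 0 ≤ a k) (hA : ∀ n, ∑ k ∈ range n, a k ≤ C * n)
    (n : ℕ) : ∑ k ∈ range n, a k / √k ≤ 3 * C * √n := by
  have hAn : (∑ k ∈ range n, a k) / √n ≤ C * √n := by
    rcases Nat.eq_zero_or_pos n with rfl | hn
    · simp
    rw [div_le_iff₀ (sqrt_pos.2 (by exact_mod_cast hn)), mul_assoc, mul_self_sqrt n.cast_nonneg]
    exact hA n
  linarith [sum_range_div_sqrt_le_add ha hA n]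

end AbelSummation

lemma exists_sum_range_le_mul_of_tendsto {a : ℕ → ℝ} {l : ℝ}
    (h : Tendsto (fun n : ℕ => (∑ k ∈ range n, a k) / n) atTop (𝓝 l)) :
    ∃ C, ∀ n : ℕ, ∑ k ∈ range n, a k ≤ C * n := by
  obtain ⟨C, hC⟩ := h.bddAbove_range
  refine ⟨C, fun n => ?_⟩
  rcases Nat.eq_zero_or_pos n with rfl | hn
  · simp
  rw [← div_le_iff₀ (by exact_mod_cast hn)]
  exact hC (Set.mem_range_self n)

lemma ae_exists_sum_range_abs_le_mul {Ω : Type*} [MeasurableSpace Ω] {μ : Measure Ω}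
    {X : ℕ → Ω → ℝ} (hint : Integrable (X 0) μ)
    (hindep : Pairwise fun i j => IndepFun (X i) (X j) μ)
    (hident : ∀ i, IdentDistrib (X i) (X 0) μ μ) :
    ∀ᵐ ω ∂μ, ∃ C, ∀ n : ℕ, ∑ k ∈ range n, |X k ω| ≤ C * n := by
  filter_upwards [strong_law_ae_real (fun i ω => |X i ω|) hint.abs
    (fun i j hij => (hindep hij).comp measurable_abs measurable_abs)
    (fun i => (hident i).comp measurable_abs)] with ω hω
  exact exists_sum_range_le_mul_of_tendsto hω

lemma abs_sum_primes_mul_rpow_le (x : ℕ → ℝ) {s : ℝ} (hs : 0 ≤ s) (N : ℕ) :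
    |∑ p ∈ filter Nat.Prime (range N), x p * (p : ℝ) ^ (-(1 / 2 + s))| ≤
      ∑ k ∈ range N, |x k| / √k := by
  calc _ ≤ ∑ p ∈ filter Nat.Prime (range N), |x p| / √p := by
        refine (abs_sum_le_sum_abs _ _).trans (sum_le_sum fun p hp => ?_)
        have hp : (1 : ℝ) ≤ p := by exact_mod_cast (mem_filter.1 hp).2.one_lt.le
        rw [abs_mul, abs_of_pos (rpow_pos_of_pos (by linarith) _), div_eq_mul_inv]
        refine mul_le_mul_of_nonneg_left ?_ (abs_nonneg _)
        calc (p : ℝ) ^ (-(1 / 2 + s)) ≤ (p : ℝ) ^ (-(1 / 2 : ℝ)) :=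
              rpow_le_rpow_of_exponent_le hp (by linarith)
          _ = (√p)⁻¹ := by rw [rpow_neg (by linarith), sqrt_eq_rpow]
    _ ≤ ∑ k ∈ range N, |x k| / √k :=
        sum_le_sum_of_subset_of_nonneg (filter_subset _ _) fun k _ _ => by positivity

/-- The normalisation `L(s)` of the paper. -/
noncomputable def lilScale (s : ℝ) : ℝ :=
  (2 * log (1 / s) * log (log (log (1 / s)))) ^ (-(1 / 2 : ℝ))

lemma tendsto_lilScale_mul_sqrt {M : ℝ → ℕ}
    (hM : Tendsto (fun s => (M s : ℝ) / log (1 / s)) (𝓝[>] 0) (𝓝 0)) :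
    Tendsto (fun s => lilScale s * √((M s : ℝ) + 1)) (𝓝[>] 0) (𝓝 0) := by
  have hlog : Tendsto (fun s : ℝ => log (1 / s)) (𝓝[>] 0) atTop := by
    simpa only [one_div, Function.comp_def] using
      tendsto_log_atTop.comp (tendsto_inv_nhdsGT_zero (𝕜 := ℝ))
  have hlll : Tendsto (fun s : ℝ => log (log (log (1 / s)))) (𝓝[>] 0) atTop :=
    tendsto_log_atTop.comp (tendsto_log_atTop.comp hlog)
  have hratio : Tendsto (fun s => ((M s : ℝ) + 1) / (2 * log (1 / s) * log (log (log (1 / s)))))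
      (𝓝[>] 0) (𝓝 0) := by
    have := (hM.add hlog.inv_tendsto_atTop).mul (hlll.const_mul_atTop two_pos).inv_tendsto_atTop
    rw [add_zero, zero_mul] at this
    refine this.congr fun s => ?_
    simp only [Pi.inv_apply]
    ring
  have hsqrt := hratio.sqrt
  rw [sqrt_zero] at hsqrt
  refine hsqrt.congr' ?_
  filter_upwards [hlog.eventually_ge_atTop 0, hlll.eventually_ge_atTop 0] with s h1 h2
  have hD : 0 ≤ 2 * log (1 / s) * log (log (log (1 / s))) := by positivity
  rw [lilScale, rpow_neg hD, ← sqrt_eq_rpow, sqrt_div' _ hD, div_eq_inv_mul]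

theorem initial_fragment_vanishes_general {Ω : Type*} [MeasureSpace Ω]
    [IsProbabilityMeasure (ℙ : Measure Ω)]
    (η : ℕ → Ω → ℝ)
    (hindep : iIndepFun η ℙ)
    (hident : ∀ i, IdentDistrib (η i) (η 0) ℙ ℙ)
    (hvar : ∫ ω, (η 0 ω) ^ 2 ∂(ℙ : Measure Ω) = 1)
    (M : ℝ → ℕ)
    (hM2 : Tendsto (fun s : ℝ => (M s : ℝ) / Real.log (1 / s))
      (nhdsWithin 0 (Set.Ioi 0)) (nhds 0)) :
    ∀ᵐ ω ∂(ℙ : Measure Ω),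
      Tendsto (fun s : ℝ =>
          (2 * Real.log (1 / s) * Real.log (Real.log (Real.log (1 / s)))) ^ (-(1 / 2 : ℝ)) *
            ∑ p ∈ Finset.filter Nat.Prime (Finset.range (M s + 1)),
              η p ω * (p : ℝ) ^ (-(1 / 2 + s)))
        (nhdsWithin 0 (Set.Ioi 0)) (nhds 0) := by
  have hint : Integrable (η 0) := by
    have hsq : Integrable fun ω => η 0 ω ^ 2 :=
      .of_integral_ne_zero (by rw [hvar]; exact one_ne_zero)
    exact ((memLp_two_iff_integrable_sq (hident 0).aemeasurable_fst.aestronglyMeasurable).2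
      hsq).integrable one_le_two
  filter_upwards [ae_exists_sum_range_abs_le_mul hint (fun i j hij => hindep.indepFun hij)
    hident] with ω ⟨C, hC⟩
  have hbound := sum_range_div_sqrt_le (fun k => abs_nonneg (η k ω)) hC
  have hlim := (tendsto_lilScale_mul_sqrt hM2).norm.const_mul (3 * C)
  rw [norm_zero, mul_zero] at hlim
  refine squeeze_zero_norm' ?_ hlim
  filter_upwards [self_mem_nhdsWithin] with s hs
  calc _ = ‖lilScale s‖ * |∑ p ∈ filter Nat.Prime (range (M s + 1)),
        η p ω * (p : ℝ) ^ (-(1 / 2 + s))| := by rw [norm_mul, norm_eq_abs]; rfl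
    _ ≤ ‖lilScale s‖ * (3 * C * √((M s : ℝ) + 1)) := by
        gcongr
        exact (abs_sum_primes_mul_rpow_le _ (le_of_lt hs) _).trans (by exact_mod_cast hbound _)
    _ = 3 * C * ‖lilScale s * √((M s : ℝ) + 1)‖ := by
        rw [norm_mul, norm_of_nonneg (sqrt_nonneg _)]; ring

/-- Lemma 2: for i.i.d. `η` with mean `0`, variance `1`, and `M(s) → ∞` with
`M(s)/log(1/s) → 0`, the initial fragment `L(s) ∑_{p ≤ M(s)} η_p p^{-1/2-s}`
tends to `0` a.s. as `s → 0+`, where `L(s) = (2 log(1/s) log log log(1/s))^{-1/2}`. -/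
theorem initial_fragment_vanishes {Ω : Type*} [MeasureSpace Ω]
    [IsProbabilityMeasure (ℙ : Measure Ω)]
    (η : ℕ → Ω → ℝ) (hmeas : ∀ i, Measurable (η i))
    (hindep : iIndepFun η ℙ)
    (hident : ∀ i, IdentDistrib (η i) (η 0) ℙ ℙ)
    (hmean : ∫ ω, η 0 ω ∂(ℙ : Measure Ω) = 0)
    (hvar : ∫ ω, (η 0 ω) ^ 2 ∂(ℙ : Measure Ω) = 1)
    (M : ℝ → ℕ)
    (hM1 : Tendsto M (nhdsWithin 0 (Set.Ioi 0)) atTop)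
    (hM2 : Tendsto (fun s : ℝ => (M s : ℝ) / Real.log (1 / s))
      (nhdsWithin 0 (Set.Ioi 0)) (nhds 0)) :
    ∀ᵐ ω ∂(ℙ : Measure Ω),
      Tendsto (fun s : ℝ =>
          (2 * Real.log (1 / s) * Real.log (Real.log (Real.log (1 / s)))) ^ (-(1 / 2 : ℝ)) *
            ∑ p ∈ Finset.filter Nat.Prime (Finset.range (M s + 1)),
              η p ω * (p : ℝ) ^ (-(1 / 2 + s)))
        (nhdsWithin 0 (Set.Ioi 0)) (nhds 0) :=
  initial_fragment_vanishes_general η hindep hident hvar M hM2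
end

section
/- There is a constant C > 0 such that for all reals 0 < v' < v and all s' = e^{-1/v'}, s'' = e^{-1/v} with v, v' sufficiently small, ∑_{p prime} p^{-1} (p^{-e^{-1/v'}} - p^{-e^{-1/v}})² ≤ C (1/v' - 1/v). In particular, partitioning dyadically, for t_{j,m} = v_{n+1} + 2^{-j} m (v_n - v_{n+1}) one gets the bound C·2^{-j}(v_n - v_{n+1})/v_{n+1}². -/
/-!
Since `p^{-b} ≤ p^{-a}`, each term is at most `p^{-(1+2a)} - p^{-(1+a+b)}`, an increment of the
prime zeta function `u ↦ ∑ₚ p^{-(1+u)}` between `u = 2a` and `u = a + b`. Its derivative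
`-∑ₚ log p · p^{-(1+u)}` is, by Abel summation against Chebyshev's bound `θ(x) ≤ x log 4`, at least
`-log 4 · ∑ₙ n^{-(1+u)} ≥ -log 4 · (1 + 1/u)`. Integrating, the increment is
`O(b - a + log (b/a)) = O(log (b/a))`, and `log (b/a) = 1/v' - 1/v` for `a = e^{-1/v'}`,
`b = e^{-1/v}`.
-/

open Real Finset Chebyshev

theorem sum_range_mul_le_sum_range_mul_of_antitone {R : Type*} [CommRing R] [PartialOrder R]
    [IsOrderedRing R] {a b f : ℕ → R} {N : ℕ} (hf : Antitone f)
    (hf₀ : ∀ i, 0 ≤ f i) (hab : ∀ n ≤ N, ∑ i ∈ range n, a i ≤ ∑ i ∈ range n, b i) :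
    ∑ i ∈ range N, a i * f i ≤ ∑ i ∈ range N, b i * f i := by
  have hG : ∀ n ≤ N, 0 ≤ ∑ i ∈ range n, (b i - a i) := fun n hn => by
    rw [sum_sub_distrib, sub_nonneg]; exact hab n hn
  have hparts : ∑ i ∈ range N, b i * f i - ∑ i ∈ range N, a i * f i
      = ∑ i ∈ range N, f i • (b i - a i) := by
    rw [← sum_sub_distrib]; exact sum_congr rfl fun i _ => by rw [smul_eq_mul]; ring
  rw [← sub_nonneg, hparts, sum_range_by_parts]
  refine sub_nonneg.2 ((sum_nonpos fun i hi => ?_).trans (smul_nonneg (hf₀ _) (hG N le_rfl)))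
  have hi : i + 1 ≤ N := by have := mem_range.1 hi; omega
  exact smul_nonpos_of_nonpos_of_nonneg (sub_nonpos.2 (hf i.le_succ)) (hG _ hi)

theorem sum_range_add_one_rpow_neg_le {u : ℝ} (hu : 0 < u) (N : ℕ) :
    ∑ k ∈ range N, ((k : ℝ) + 1) ^ (-(1 + u)) ≤ 1 + 1 / u := by
  rcases N with _ | N
  · simp only [range_zero, sum_empty]; positivity
  rw [sum_range_succ', Nat.cast_zero, zero_add, one_rpow, add_comm]
  gcongr
  have hf : AntitoneOn (fun x : ℝ => x ^ (-(1 + u))) (Set.Icc 1 (1 + N)) :=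
    fun x hx y _ hxy => rpow_le_rpow_of_nonpos (by linarith [hx.1]) hxy (by linarith)
  have hint := hf.sum_le_integral
  rw [integral_rpow (Or.inr ⟨by linarith, by simp⟩)] at hint
  calc ∑ k ∈ range N, ((k + 1 : ℕ) + 1 : ℝ) ^ (-(1 + u))
      = ∑ k ∈ range N, (1 + ((k + 1 : ℕ) : ℝ)) ^ (-(1 + u)) := by simp only [add_comm]
    _ ≤ ((1 + N) ^ (-(1 + u) + 1) - 1 ^ (-(1 + u) + 1)) / (-(1 + u) + 1) := hint
    _ ≤ 1 / u := by
      rw [one_rpow, show -(1 + u) + 1 = -u by ring, div_neg, ← neg_div, neg_sub]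
      gcongr
      linarith [rpow_nonneg (by positivity : (0 : ℝ) ≤ 1 + N) (-u)]

theorem sum_primesLE_eq_sum_range (g : ℕ → ℝ) (N : ℕ) :
    ∑ p ∈ Nat.primesLE N, g p = ∑ k ∈ range N, if (k + 1).Prime then g (k + 1) else 0 := by
  rw [Nat.primesLE, Nat.primesBelow, sum_filter, sum_range_succ']
  simp [Nat.not_prime_zero]

theorem sum_primesLE_log_mul_rpow_neg_le {u : ℝ} (hu : 0 < u) (N : ℕ) :
    ∑ p ∈ Nat.primesLE N, log p * (p : ℝ) ^ (-(1 + u)) ≤ log 4 * (1 + 1 / u) := by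
  set a : ℕ → ℝ := fun k => if (k + 1).Prime then log (k + 1 : ℕ) else 0
  set f : ℕ → ℝ := fun k => ((k : ℝ) + 1) ^ (-(1 + u))
  have hf : Antitone f := fun i j hij =>
    rpow_le_rpow_of_nonpos (by positivity) (by gcongr) (by linarith)
  have htheta : ∀ n ≤ N, ∑ k ∈ range n, a k ≤ ∑ k ∈ range n, log 4 := fun n _ => by
    have := theta_le_log4_mul_x n.cast_nonneg
    rw [theta_eq_sum_primesLE_log, sum_primesLE_eq_sum_range] at this
    simpa [a, mul_comm] using this
  calc ∑ p ∈ Nat.primesLE N, log p * (p : ℝ) ^ (-(1 + u)) = ∑ k ∈ range N, a k * f k := by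
        rw [sum_primesLE_eq_sum_range]
        refine sum_congr rfl fun k _ => ?_
        simp only [a, f, ite_mul, zero_mul, Nat.cast_add, Nat.cast_one]
    _ ≤ ∑ k ∈ range N, log 4 * f k :=
        sum_range_mul_le_sum_range_mul_of_antitone hf (fun _ => by positivity) htheta
    _ ≤ log 4 * (1 + 1 / u) := by
        rw [← mul_sum]
        gcongr
        exact sum_range_add_one_rpow_neg_le hu N

theorem sum_primesLE_rpow_neg_sub_le {s t : ℝ} (hs : 0 < s) (hst : s ≤ t) (N : ℕ) :
    ∑ p ∈ Nat.primesLE N, ((p : ℝ) ^ (-(1 + s)) - (p : ℝ) ^ (-(1 + t)))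
      ≤ log 4 * (t - s + log (t / s)) := by
  set F : ℝ → ℝ := fun u => log 4 * (u + log u) + ∑ p ∈ Nat.primesLE N, (p : ℝ) ^ (-(1 + u))
  have hderiv : ∀ u > 0, HasDerivAt F
      (log 4 * (1 + 1 / u) - ∑ p ∈ Nat.primesLE N, log p * (p : ℝ) ^ (-(1 + u))) u := by
    intro u hu
    have hpow : ∀ p ∈ Nat.primesLE N, HasDerivAt (fun u => (p : ℝ) ^ (-(1 + u)))
        (-(log p * (p : ℝ) ^ (-(1 + u)))) u := fun p hp => by
      have hp : (0 : ℝ) < p := by exact_mod_cast (Nat.prime_of_mem_primesLE hp).pos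
      simpa using ((hasDerivAt_id u).const_add 1).neg.const_rpow hp
    have := (((hasDerivAt_id u).add (hasDerivAt_log hu.ne')).const_mul (log 4)).add
      (HasDerivAt.fun_sum hpow)
    exact this.congr_deriv (by rw [sum_neg_distrib, one_div, sub_eq_add_neg])
  have hmono : MonotoneOn F (Set.Ioi 0) := by
    refine monotoneOn_of_hasDerivWithinAt_nonneg (convex_Ioi 0)
      (f' := fun u => log 4 * (1 + 1 / u) - ∑ p ∈ Nat.primesLE N, log p * (p : ℝ) ^ (-(1 + u)))
      (fun u hu => (hderiv u hu).continuousAt.continuousWithinAt) (fun u hu => ?_) (fun u hu => ?_)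
    · rw [interior_Ioi] at hu ⊢
      exact (hderiv u hu).hasDerivWithinAt
    · rw [interior_Ioi] at hu
      exact sub_nonneg.2 (sum_primesLE_log_mul_rpow_neg_le hu N)
  have hFst := hmono hs (hs.trans_le hst) hst
  simp only [F] at hFst
  rw [sum_sub_distrib, log_div (by linarith) hs.ne']
  linarith

theorem tsum_primes_le_of_sum_primesLE_le {F : ℕ → ℝ} {c : ℝ} (hF : ∀ p, p.Prime → 0 ≤ F p)
    (h : ∀ N, ∑ p ∈ Nat.primesLE N, F p ≤ c) : ∑' p : Nat.Primes, F p ≤ c := by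
  refine tsum_le_of_sum_le' (by simpa using h 0) fun S => ?_
  calc ∑ p ∈ S, F p = ∑ n ∈ S.image (↑), F n :=
        (sum_image fun p _ q _ h => Nat.Primes.coe_nat_injective h).symm
    _ ≤ ∑ n ∈ Nat.primesLE (S.sup (↑)), F n := by
        refine sum_le_sum_of_subset_of_nonneg (fun n hn => ?_) fun n hn _ =>
          hF n (Nat.prime_of_mem_primesLE hn)
        obtain ⟨p, hp, rfl⟩ := mem_image.1 hn
        exact Nat.mem_primesLE.2 ⟨le_sup (f := ((↑) : Nat.Primes → ℕ)) hp, p.2⟩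
    _ ≤ c := h _

theorem inv_mul_rpow_neg_sub_sq_le {x a b : ℝ} (hx : 1 ≤ x) (hab : a ≤ b) :
    x⁻¹ * (x ^ (-a) - x ^ (-b)) ^ 2 ≤ x ^ (-(1 + 2 * a)) - x ^ (-(1 + (a + b))) := by
  have hx₀ : 0 < x := by linarith
  have hba : x ^ (-b) ≤ x ^ (-a) := rpow_le_rpow_of_exponent_le hx (by linarith)
  have hb₀ : 0 ≤ x ^ (-b) := rpow_nonneg hx₀.le _
  calc x⁻¹ * (x ^ (-a) - x ^ (-b)) ^ 2 ≤ x⁻¹ * (x ^ (-a) * (x ^ (-a) - x ^ (-b))) := by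
        gcongr; nlinarith
    _ = x ^ (-(1 + 2 * a)) - x ^ (-(1 + (a + b))) := by
        rw [← rpow_neg_one, mul_sub, mul_sub, ← rpow_add hx₀, ← rpow_add hx₀, ← rpow_add hx₀,
          ← rpow_add hx₀]
        ring_nf

theorem tsum_primes_inv_mul_rpow_neg_sub_sq_le {a b : ℝ} (ha : 0 < a) (hab : a ≤ b) (hb : b ≤ 1) :
    ∑' p : Nat.Primes, ((p : ℕ) : ℝ)⁻¹ * (((p : ℕ) : ℝ) ^ (-a) - ((p : ℕ) : ℝ) ^ (-b)) ^ 2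
      ≤ 2 * log 4 * log (b / a) := by
  have hb₀ : 0 < b := ha.trans_le hab
  have hsub_le : b - a ≤ log (b / a) := by
    have := one_sub_inv_le_log_of_pos (div_pos hb₀ ha)
    rw [inv_div, one_sub_div hb₀.ne'] at this
    refine le_trans ?_ this
    rw [le_div_iff₀ hb₀]
    nlinarith
  have hmid_le : log ((a + b) / (2 * a)) ≤ log (b / a) := by
    gcongr log ?_
    rw [div_le_div_iff₀ (by positivity) ha]
    nlinarith
  refine tsum_primes_le_of_sum_primesLE_le
    (F := fun n : ℕ => (n : ℝ)⁻¹ * ((n : ℝ) ^ (-a) - (n : ℝ) ^ (-b)) ^ 2)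
    (fun p _ => by positivity) fun N => ?_
  calc ∑ p ∈ Nat.primesLE N, (p : ℝ)⁻¹ * ((p : ℝ) ^ (-a) - (p : ℝ) ^ (-b)) ^ 2
      ≤ ∑ p ∈ Nat.primesLE N, ((p : ℝ) ^ (-(1 + 2 * a)) - (p : ℝ) ^ (-(1 + (a + b)))) :=
        sum_le_sum fun p hp => inv_mul_rpow_neg_sub_sq_le
          (by exact_mod_cast (Nat.prime_of_mem_primesLE hp).one_le) hab
    _ ≤ log 4 * (a + b - 2 * a + log ((a + b) / (2 * a))) :=
        sum_primesLE_rpow_neg_sub_le (by positivity) (by linarith) N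
    _ ≤ log 4 * (log (b / a) + log (b / a)) := by
        have : 0 < log 4 := log_pos (by norm_num)
        gcongr
        linarith
    _ = 2 * log 4 * log (b / a) := by ring

/-- There is a constant `C > 0` such that for all sufficiently small `0 < v' < v`,
`∑_p p^{-1} (p^{-e^{-1/v'}} - p^{-e^{-1/v}})² ≤ C (1/v' - 1/v)` (sum over primes). -/
theorem prime_sum_increment_bound :
    ∃ C : ℝ, 0 < C ∧ ∃ ε : ℝ, 0 < ε ∧ ∀ v v' : ℝ, 0 < v' → v' < v → v < ε →
      (∑' p : Nat.Primes, ((p : ℕ) : ℝ)⁻¹ *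
          (((p : ℕ) : ℝ) ^ (-Real.exp (-1 / v')) - ((p : ℕ) : ℝ) ^ (-Real.exp (-1 / v))) ^ 2) ≤
        C * (1 / v' - 1 / v) := by
  refine ⟨2 * log 4, by positivity, 1, one_pos, fun v v' hv' hv'v _ => ?_⟩
  have hv : 0 < v := hv'.trans hv'v
  have hexp : log (exp (-1 / v) / exp (-1 / v')) = 1 / v' - 1 / v := by
    rw [← exp_sub, log_exp]; ring
  rw [← hexp]
  refine tsum_primes_inv_mul_rpow_neg_sub_sq_le (exp_pos _) (exp_le_exp.2 ?_)
    (exp_le_one_iff.2 (div_nonpos_of_nonpos_of_nonneg (by norm_num) hv.le))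
  rw [neg_div, neg_div, neg_le_neg_iff]
  exact one_div_le_one_div_of_le hv' hv'v.le
end
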